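/- Assume every buyer distribution and every seller distribution is regular. Then there exist a deterministic allocation X mapping each type profile (b,s) to a matching X(b,s) ∈ F, and payments p^B_i(b,s), p^S_j(b,s), such that the mechanism (X, p^B, p^S) is DSIC, ex-post IR, and ex-ante WBB, and moreover 2·GFT(X) ≥ GFT(M') for every implementable mechanism M' that is IR, BIC and ex-ante WBB. -/

import Mathlib

/-!
Two candidate mechanisms pick a maximum-weight feasible matching and charge threshold prices:
the buyer-offering one uses the weights `φ_i(b_i) - s_j`, the seller-offering one the weights
`b_i - τ_j(s_j)`. Regularity makes every weight monotone in its agent's own report, so each agent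
faces a posted threshold: this gives DSIC and ex-post IR. By Myerson's payment identity the buyers
of the buyer-offering mechanism pay their virtual values in expectation, and each trading seller
receives at most the virtual value of his partner; symmetrically for the seller-offering one.

For a BIC, IR, ex-ante WBB benchmark, the gains from trade are the buyers' virtual surplus plus
the buyers' information rents, and also the sellers' virtual surplus plus the sellers' rents.
The rents are bounded by the agents' interim utilities, whose total is at most the gains from
trade by WBB. So the benchmark is bounded by the sum of the two virtual surpluses, and a
maximum-weight matching dominates every fractional one: the better of the two mechanisms
achieves half of the benchmark.
-/

open Finset

namespace Stmt10

variable {n m : ℕ} {K : Fin n → ℕ} {K' : Fin m → ℕ}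

/-- A buyer type profile. -/
abbrev ProfileB (K : Fin n → ℕ) := ∀ i, Fin (K i)

/-- A seller type profile. -/
abbrev ProfileS (K' : Fin m → ℕ) := ∀ j, Fin (K' j)

/-- Expectation over the independent product of buyers' and sellers' distributions. -/
def Ex (f : ∀ i, Fin (K i) → ℝ) (g : ∀ j, Fin (K' j) → ℝ)
    (h : ProfileB K → ProfileS K' → ℝ) : ℝ :=
  ∑ b : ProfileB K, ∑ s : ProfileS K',
    ((∏ i, f i (b i)) * ∏ j, g j (s j)) * h b s

/-- `x` is implementable w.r.t. the feasibility constraint `F`. -/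
def Implementable (F : Set (Finset (Fin n × Fin m)))
    (x : ProfileB K → ProfileS K' → Fin n × Fin m → ℝ) : Prop :=
  ∀ b s, ∃ γ : Finset (Fin n × Fin m) → ℝ,
    (∀ M, 0 ≤ γ M) ∧ (∀ M, γ M ≠ 0 → M ∈ F) ∧ (∑ M, γ M = 1) ∧
    (∀ e, x b s e = ∑ M, γ M * (if e ∈ M then 1 else 0))

/-- `x^B_i(b,s)` for a deterministic allocation `X`: `1` iff buyer `i` trades. -/
def detXB (X : ProfileB K → ProfileS K' → Finset (Fin n × Fin m))
    (i : Fin n) (b : ProfileB K) (s : ProfileS K') : ℝ :=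
  if ∃ j, (i, j) ∈ X b s then 1 else 0

/-- `x^S_j(b,s)` for a deterministic allocation `X`: `1` iff seller `j` trades. -/
def detXS (X : ProfileB K → ProfileS K' → Finset (Fin n × Fin m))
    (j : Fin m) (b : ProfileB K) (s : ProfileS K') : ℝ :=
  if ∃ i, (i, j) ∈ X b s then 1 else 0

/-- Interim utility of buyer `i` with true type `t` reporting `t'`
(for a randomized allocation `x`). -/
def utilB (vB : ∀ i, Fin (K i) → ℝ)
    (f : ∀ i, Fin (K i) → ℝ) (g : ∀ j, Fin (K' j) → ℝ)
    (x : ProfileB K → ProfileS K' → Fin n × Fin m → ℝ)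
    (pB : Fin n → ProfileB K → ProfileS K' → ℝ)
    (i : Fin n) (t t' : Fin (K i)) : ℝ :=
  Ex f g (fun b s =>
    vB i t * (∑ j, x (Function.update b i t') s (i, j))
      - pB i (Function.update b i t') s)

/-- Interim utility of seller `j` with true type `t` reporting `t'`. -/
def utilS (vS : ∀ j, Fin (K' j) → ℝ)
    (f : ∀ i, Fin (K i) → ℝ) (g : ∀ j, Fin (K' j) → ℝ)
    (x : ProfileB K → ProfileS K' → Fin n × Fin m → ℝ)
    (pS : Fin m → ProfileB K → ProfileS K' → ℝ)
    (j : Fin m) (t t' : Fin (K' j)) : ℝ :=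
  Ex f g (fun b s =>
    pS j b (Function.update s j t')
      - vS j t * (∑ i, x b (Function.update s j t') (i, j)))

/-- Buyer's Myerson virtual value. -/
noncomputable def phi (Ki : ℕ) (β f : Fin Ki → ℝ) (r : Fin Ki) : ℝ :=
  β r - ((if h : (r : ℕ) + 1 < Ki then β ⟨(r : ℕ) + 1, h⟩ else β r) - β r)
      * (∑ l ∈ Finset.Ioi r, f l) / f r

/-- Seller's Myerson virtual value. -/
noncomputable def tau (Kj : ℕ) (α g : Fin Kj → ℝ) (r : Fin Kj) : ℝ :=
  α r + (α r - (if 0 < (r : ℕ) then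
        α ⟨(r : ℕ) - 1, Nat.lt_of_le_of_lt (Nat.sub_le _ _) r.isLt⟩ else α r))
      * (∑ l ∈ Finset.Iio r, g l) / g r

namespace Fin

variable {k : ℕ}

lemma Ioi_castSucc (i : Fin k) : Ioi i.castSucc = Ici i.succ := by
  ext; simp [Fin.lt_def, Fin.le_def]

lemma Iio_succ (i : Fin k) : Iio i.succ = Iic i.castSucc := by
  ext; simp [Fin.lt_def, Fin.le_def]

end Fin

section BuyerVirtualValue

variable {k : ℕ} (β : Fin k → ℝ) {f : Fin k → ℝ}

noncomputable def succVal (t : Fin k) : ℝ :=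
  if h : (t : ℕ) + 1 < k then β ⟨t + 1, h⟩ else β t

variable {β} in
lemma le_succVal (hβ : Monotone β) (t : Fin k) : β t ≤ succVal β t := by
  unfold succVal
  split_ifs
  · exact hβ (Fin.le_def.2 (by simp))
  · rfl

lemma succVal_castSucc {k : ℕ} (β : Fin (k + 1) → ℝ) (i : Fin k) :
    succVal β i.castSucc = β i.succ := by
  simp [succVal, Fin.succ]

lemma succVal_last {k : ℕ} (β : Fin (k + 1) → ℝ) :
    succVal β (Fin.last k) = β (Fin.last k) := by
  simp [succVal]

lemma mul_sub_phi {t : Fin k} (ht : f t ≠ 0) :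
    f t * (β t - phi k β f t) = (succVal β t - β t) * ∑ l ∈ Ioi t, f l := by
  rw [phi, succVal]
  field_simp
  ring

variable {β} in
lemma phi_le (hβ : Monotone β) (hf : ∀ t, 0 < f t) (t : Fin k) : phi k β f t ≤ β t := by
  have h := mul_sub_phi β (hf t).ne'
  have : 0 ≤ (succVal β t - β t) * ∑ l ∈ Ioi t, f l :=
    mul_nonneg (sub_nonneg.2 (le_succVal hβ t)) (sum_nonneg fun l _ => (hf l).le)
  rw [← h] at this
  linarith [(mul_nonneg_iff_of_pos_left (hf t)).1 this]

lemma sum_Ici_mul_phi (hf : ∀ t, f t ≠ 0) (t₀ : Fin k) :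
    ∑ t ∈ Ici t₀, f t * phi k β f t = β t₀ * ∑ t ∈ Ici t₀, f t := by
  obtain ⟨k, rfl⟩ := Nat.exists_eq_add_one_of_ne_zero t₀.pos.ne'
  induction t₀ using Fin.reverseInduction with
  | last =>
    have h := mul_sub_phi β (hf (Fin.last k))
    rw [succVal_last, sub_self, zero_mul] at h
    simp only [← Fin.top_eq_last, Ici_top, sum_singleton] at h ⊢
    linear_combination -h
  | cast i ih =>
    have h := mul_sub_phi β (hf i.castSucc)
    rw [succVal_castSucc, Fin.Ioi_castSucc] at h
    rw [← Ioi_insert, sum_insert notMem_Ioi_self, sum_insert notMem_Ioi_self,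
      Fin.Ioi_castSucc, ih]
    linear_combination -h

lemma sum_Iio_succVal_sub_mul_le (x u : Fin k → ℝ) (hu : ∀ t, 0 ≤ u t)
    (hstep : ∀ (t : Fin k) (h : (t : ℕ) + 1 < k),
      u t + (β ⟨t + 1, h⟩ - β t) * x t ≤ u ⟨t + 1, h⟩)
    (l : Fin k) : ∑ t ∈ Iio l, (succVal β t - β t) * x t ≤ u l := by
  obtain ⟨k, rfl⟩ := Nat.exists_eq_add_one_of_ne_zero l.pos.ne'
  induction l using Fin.induction with
  | zero => simpa [← bot_eq_zero] using hu 0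
  | succ i ih =>
    have h := hstep i.castSucc (by simp)
    rw [Fin.Iio_succ, ← Iio_insert, sum_insert notMem_Iio_self, succVal_castSucc]
    simp only [Fin.val_castSucc] at h
    rw [show (⟨i + 1, _⟩ : Fin (k + 1)) = i.succ from rfl] at h
    linarith

variable {β} in
lemma sum_mul_sub_phi_mul_le (hf : ∀ t, 0 < f t) (x u : Fin k → ℝ) (hu : ∀ t, 0 ≤ u t)
    (hstep : ∀ (t : Fin k) (h : (t : ℕ) + 1 < k),
      u t + (β ⟨t + 1, h⟩ - β t) * x t ≤ u ⟨t + 1, h⟩) :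
    ∑ t, f t * ((β t - phi k β f t) * x t) ≤ ∑ t, f t * u t :=
  calc ∑ t, f t * ((β t - phi k β f t) * x t)
      = ∑ t, ∑ l ∈ Ioi t, f l * ((succVal β t - β t) * x t) := by
        refine sum_congr rfl fun t _ => ?_
        rw [← mul_assoc, mul_sub_phi β (hf t).ne', mul_comm _ (∑ l ∈ _, _), sum_mul, sum_mul]
        exact sum_congr rfl fun l _ => by ring
    _ = ∑ l, f l * ∑ t ∈ Iio l, (succVal β t - β t) * x t := by
        simp only [mul_sum]
        exact sum_comm' (by simp)
    _ ≤ ∑ l, f l * u l := sum_le_sum fun l _ =>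
        mul_le_mul_of_nonneg_left (sum_Iio_succVal_sub_mul_le β x u hu hstep l) (hf l).le

end BuyerVirtualValue

section SellerVirtualValue

variable {k : ℕ} (α : Fin k → ℝ) {g : Fin k → ℝ}

noncomputable def predVal (t : Fin k) : ℝ :=
  if 0 < (t : ℕ) then α ⟨t - 1, Nat.lt_of_le_of_lt (Nat.sub_le _ _) t.isLt⟩ else α t

variable {α} in
lemma predVal_le (hα : Monotone α) (t : Fin k) : predVal α t ≤ α t := by
  unfold predVal
  split_ifs
  · exact hα (Fin.le_def.2 (by simp))
  · rfl

lemma predVal_succ {k : ℕ} (α : Fin (k + 1) → ℝ) (i : Fin k) :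
    predVal α i.succ = α i.castSucc := by
  simp [predVal, Fin.castSucc, Fin.castAdd, Fin.castLE]

lemma predVal_zero {k : ℕ} (α : Fin (k + 1) → ℝ) : predVal α 0 = α 0 := by
  simp [predVal]

lemma mul_tau_sub {t : Fin k} (ht : g t ≠ 0) :
    g t * (tau k α g t - α t) = (α t - predVal α t) * ∑ l ∈ Iio t, g l := by
  rw [tau, predVal]
  field_simp
  ring

variable {α} in
lemma le_tau (hα : Monotone α) (hg : ∀ t, 0 < g t) (t : Fin k) : α t ≤ tau k α g t := by
  have h := mul_tau_sub α (hg t).ne'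
  have : 0 ≤ (α t - predVal α t) * ∑ l ∈ Iio t, g l :=
    mul_nonneg (sub_nonneg.2 (predVal_le hα t)) (sum_nonneg fun l _ => (hg l).le)
  rw [← h] at this
  linarith [(mul_nonneg_iff_of_pos_left (hg t)).1 this]

lemma sum_Iic_mul_tau (hg : ∀ t, g t ≠ 0) (t₀ : Fin k) :
    ∑ t ∈ Iic t₀, g t * tau k α g t = α t₀ * ∑ t ∈ Iic t₀, g t := by
  obtain ⟨k, rfl⟩ := Nat.exists_eq_add_one_of_ne_zero t₀.pos.ne'
  induction t₀ using Fin.induction with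
  | zero =>
    have h := mul_tau_sub α (hg 0)
    rw [predVal_zero, sub_self, zero_mul] at h
    simp only [← bot_eq_zero, Iic_bot, sum_singleton] at h ⊢
    linear_combination h
  | succ i ih =>
    have h := mul_tau_sub α (hg i.succ)
    rw [predVal_succ, Fin.Iio_succ] at h
    rw [← Iio_insert, sum_insert notMem_Iio_self, sum_insert notMem_Iio_self, Fin.Iio_succ, ih]
    linear_combination h

lemma sum_Ioi_sub_predVal_mul_le (y u : Fin k → ℝ) (hu : ∀ t, 0 ≤ u t)
    (hstep : ∀ t : Fin k, 0 < (t : ℕ) →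
      u t + (α t - α ⟨t - 1, Nat.lt_of_le_of_lt (Nat.sub_le _ _) t.isLt⟩) * y t
        ≤ u ⟨t - 1, Nat.lt_of_le_of_lt (Nat.sub_le _ _) t.isLt⟩)
    (l : Fin k) : ∑ t ∈ Ioi l, (α t - predVal α t) * y t ≤ u l := by
  obtain ⟨k, rfl⟩ := Nat.exists_eq_add_one_of_ne_zero l.pos.ne'
  induction l using Fin.reverseInduction with
  | last => simpa [← Fin.top_eq_last] using hu (Fin.last k)
  | cast i ih =>
    have h := hstep i.succ (by simp)
    rw [Fin.Ioi_castSucc, ← Ioi_insert, sum_insert notMem_Ioi_self, predVal_succ]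
    rw [show (⟨i.succ - 1, _⟩ : Fin (k + 1)) = i.castSucc from Fin.ext (by simp)] at h
    linarith

variable {α} in
lemma sum_mul_tau_sub_mul_le (hg : ∀ t, 0 < g t) (y u : Fin k → ℝ) (hu : ∀ t, 0 ≤ u t)
    (hstep : ∀ t : Fin k, 0 < (t : ℕ) →
      u t + (α t - α ⟨t - 1, Nat.lt_of_le_of_lt (Nat.sub_le _ _) t.isLt⟩) * y t
        ≤ u ⟨t - 1, Nat.lt_of_le_of_lt (Nat.sub_le _ _) t.isLt⟩) :
    ∑ t, g t * ((tau k α g t - α t) * y t) ≤ ∑ t, g t * u t :=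
  calc ∑ t, g t * ((tau k α g t - α t) * y t)
      = ∑ t, ∑ l ∈ Iio t, g l * ((α t - predVal α t) * y t) := by
        refine sum_congr rfl fun t _ => ?_
        rw [← mul_assoc, mul_tau_sub α (hg t).ne', mul_comm _ (∑ l ∈ _, _), sum_mul, sum_mul]
        exact sum_congr rfl fun l _ => by ring
    _ = ∑ l, g l * ∑ t ∈ Ioi l, (α t - predVal α t) * y t := by
        simp only [mul_sum]
        exact sum_comm' (by simp)
    _ ≤ ∑ l, g l * u l := sum_le_sum fun l _ =>
        mul_le_mul_of_nonneg_left (sum_Ioi_sub_predVal_mul_le α y u hu hstep l) (hg l).le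

end SellerVirtualValue

section ThresholdPrice

variable {α : Type*} [LinearOrder α] (v : α → ℝ) (W : Finset α)

noncomputable def thresholdPriceB (t : α) : ℝ :=
  if h : t ∈ W then v (W.min' ⟨t, h⟩) else 0

noncomputable def thresholdPriceS (t : α) : ℝ :=
  if h : t ∈ W then v (W.max' ⟨t, h⟩) else 0

variable {v W}

lemma thresholdPriceB_le (hv : Monotone v) (x : α) :
    thresholdPriceB v W x ≤ v x * if x ∈ W then 1 else 0 := by
  unfold thresholdPriceB
  split_ifs with hx
  · simpa using hv (W.min'_le x hx)
  · simp

lemma le_thresholdPriceS (hv : Monotone v) (x : α) :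
    v x * (if x ∈ W then 1 else 0) ≤ thresholdPriceS v W x := by
  unfold thresholdPriceS
  split_ifs with hx
  · simpa using hv (W.le_max' x hx)
  · simp

lemma thresholdPriceB_truthful (hv : Monotone v) (hW : IsUpperSet (W : Set α)) (x t : α) :
    v x * (if t ∈ W then 1 else 0) - thresholdPriceB v W t
      ≤ v x * (if x ∈ W then 1 else 0) - thresholdPriceB v W x := by
  by_cases ht : t ∈ W
  · have hne : W.Nonempty := ⟨t, ht⟩
    have hx : x ∈ W ∨ x < W.min' hne :=
      (le_or_gt (W.min' hne) x).imp (fun h => hW h (W.min'_mem hne)) id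
    rcases hx with hx | hx
    · simp [thresholdPriceB, ht, hx]
    · have := hv hx.le
      simp only [thresholdPriceB, ht, dif_pos, if_true]
      simp only [show x ∉ W from fun h => hx.not_ge (W.min'_le x h), if_false, dite_false]
      linarith
  · have h0 : thresholdPriceB v W t = 0 := dif_neg ht
    rw [h0, if_neg ht]
    linarith [thresholdPriceB_le (W := W) hv x]

lemma thresholdPriceS_truthful (hv : Monotone v) (hW : IsLowerSet (W : Set α)) (x t : α) :
    thresholdPriceS v W t - v x * (if t ∈ W then 1 else 0)
      ≤ thresholdPriceS v W x - v x * (if x ∈ W then 1 else 0) := by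
  by_cases ht : t ∈ W
  · have hne : W.Nonempty := ⟨t, ht⟩
    have hx : x ∈ W ∨ W.max' hne < x :=
      (le_or_gt x (W.max' hne)).imp (fun h => hW h (W.max'_mem hne)) id
    rcases hx with hx | hx
    · simp [thresholdPriceS, ht, hx]
    · have := hv hx.le
      simp only [thresholdPriceS, ht, dif_pos, if_true]
      simp only [show x ∉ W from fun h => hx.not_ge (W.le_max' x h), if_false, dite_false]
      linarith
  · have h0 : thresholdPriceS v W t = 0 := dif_neg ht
    rw [h0, if_neg ht]
    linarith [le_thresholdPriceS (W := W) hv x]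

end ThresholdPrice

lemma eq_Ici_of_isUpperSet {α : Type*} [LinearOrder α] [LocallyFiniteOrderTop α] {W : Finset α}
    (hW : IsUpperSet (W : Set α)) (hne : W.Nonempty) : W = Ici (W.min' hne) := by
  ext t
  exact ⟨fun h => mem_Ici.2 (W.min'_le t h), fun h => hW (mem_Ici.1 h) (W.min'_mem hne)⟩

lemma eq_Iic_of_isLowerSet {α : Type*} [LinearOrder α] [LocallyFiniteOrderBot α] {W : Finset α}
    (hW : IsLowerSet (W : Set α)) (hne : W.Nonempty) : W = Iic (W.max' hne) := by
  ext t
  exact ⟨fun h => mem_Iic.2 (W.le_max' t h), fun h => hW (mem_Iic.1 h) (W.max'_mem hne)⟩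

lemma sum_mul_thresholdPriceB {k : ℕ} (β : Fin k → ℝ) {f : Fin k → ℝ}
    (hf : ∀ t, f t ≠ 0) {W : Finset (Fin k)} (hW : IsUpperSet (W : Set (Fin k))) :
    ∑ t, f t * thresholdPriceB β W t = ∑ t ∈ W, f t * phi k β f t := by
  rcases W.eq_empty_or_nonempty with rfl | hne
  · simp [thresholdPriceB]
  have hprice (t : Fin k) :
      f t * thresholdPriceB β W t = if t ∈ W then f t * β (W.min' hne) else 0 := by
    unfold thresholdPriceB
    split_ifs <;> simp
  set t₀ := W.min' hne
  rw [sum_congr rfl fun t _ => hprice t, sum_ite_mem, univ_inter, ← sum_mul, mul_comm,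
    eq_Ici_of_isUpperSet hW hne, sum_Ici_mul_phi β hf]

lemma sum_mul_thresholdPriceS {k : ℕ} (α : Fin k → ℝ) {g : Fin k → ℝ}
    (hg : ∀ t, g t ≠ 0) {W : Finset (Fin k)} (hW : IsLowerSet (W : Set (Fin k))) :
    ∑ t, g t * thresholdPriceS α W t = ∑ t ∈ W, g t * tau k α g t := by
  rcases W.eq_empty_or_nonempty with rfl | hne
  · simp [thresholdPriceS]
  have hprice (t : Fin k) :
      g t * thresholdPriceS α W t = if t ∈ W then g t * α (W.max' hne) else 0 := by
    unfold thresholdPriceS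
    split_ifs <;> simp
  set t₀ := W.max' hne
  rw [sum_congr rfl fun t _ => hprice t, sum_ite_mem, univ_inter, ← sum_mul, mul_comm,
    eq_Iic_of_isLowerSet hW hne, sum_Iic_mul_tau α hg]

section Resample

variable {ι R : Type*} [Fintype ι] [DecidableEq ι] [CommSemiring R] {α : ι → Type*}

lemma mul_prod_update (w : ∀ i, α i → R) (b : ∀ i, α i) (i : ι) (a : α i) :
    w i a * ∏ j, w j (b j) = w i (b i) * ∏ j, w j (Function.update b i a j) := by
  simp only [Function.apply_update (fun j => w j), prod_update_of_mem (mem_univ i),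
    ← mul_prod_erase univ (fun j => w j (b j)) (mem_univ i), sdiff_singleton_eq_erase]
  ring

lemma sum_prod_mul_sum_update [∀ i, Fintype (α i)] (w : ∀ i, α i → R) (i : ι)
    (hw : ∑ a, w i a = 1) (H : (∀ j, α j) → R) :
    ∑ b, (∏ j, w j (b j)) * ∑ a, w i a * H (Function.update b i a)
      = ∑ b, (∏ j, w j (b j)) * H b := by
  let σ : (∀ j, α j) × α i ≃ (∀ j, α j) × α i :=
    Function.Involutive.toPerm (fun p => (Function.update p.1 i p.2, p.1 i)) fun p => by simp
  calc ∑ b, (∏ j, w j (b j)) * ∑ a, w i a * H (Function.update b i a)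
      = ∑ p : (∀ j, α j) × α i, w i (p.1 i) * (∏ j, w j (Function.update p.1 i p.2 j)) *
          H (Function.update p.1 i p.2) := by
        rw [Fintype.sum_prod_type]
        refine sum_congr rfl fun b _ => ?_
        rw [mul_sum]
        exact sum_congr rfl fun a _ => by rw [← mul_prod_update]; ring
    _ = ∑ p : (∀ j, α j) × α i, w i p.2 * (∏ j, w j (p.1 j)) * H p.1 :=
        Equiv.sum_comp σ (fun p => w i p.2 * (∏ j, w j (p.1 j)) * H p.1)
    _ = ∑ b, (∏ j, w j (b j)) * H b := by
        rw [Fintype.sum_prod_type]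
        refine sum_congr rfl fun b _ => ?_
        simp only [← sum_mul, hw, one_mul]

end Resample

section Expectation

variable (f : ∀ i, Fin (K i) → ℝ) (g : ∀ j, Fin (K' j) → ℝ)

lemma Ex_add (h₁ h₂ : ProfileB K → ProfileS K' → ℝ) :
    Ex f g (fun b s => h₁ b s + h₂ b s) = Ex f g h₁ + Ex f g h₂ := by
  simp only [Ex, mul_add, sum_add_distrib]

lemma Ex_sub (h₁ h₂ : ProfileB K → ProfileS K' → ℝ) :
    Ex f g (fun b s => h₁ b s - h₂ b s) = Ex f g h₁ - Ex f g h₂ := by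
  simp only [Ex, mul_sub, sum_sub_distrib]

lemma Ex_const_mul (c : ℝ) (h : ProfileB K → ProfileS K' → ℝ) :
    Ex f g (fun b s => c * h b s) = c * Ex f g h := by
  simp only [Ex, mul_sum, mul_left_comm c]

lemma Ex_sum {α : Type*} (A : Finset α) (h : α → ProfileB K → ProfileS K' → ℝ) :
    Ex f g (fun b s => ∑ a ∈ A, h a b s) = ∑ a ∈ A, Ex f g (h a) := by
  simp only [Ex, mul_sum]
  conv_rhs => rw [sum_comm]
  exact sum_congr rfl fun b _ => sum_comm

variable {f g} in
lemma Ex_mono (hf : ∀ i t, 0 ≤ f i t) (hg : ∀ j t, 0 ≤ g j t)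
    {h h' : ProfileB K → ProfileS K' → ℝ} (hle : ∀ b s, h b s ≤ h' b s) :
    Ex f g h ≤ Ex f g h' :=
  sum_le_sum fun b _ => sum_le_sum fun s _ => mul_le_mul_of_nonneg_left (hle b s) <|
    mul_nonneg (prod_nonneg fun i _ => hf i (b i)) (prod_nonneg fun j _ => hg j (s j))

lemma Ex_eq_sum_prod_mul (h : ProfileB K → ProfileS K' → ℝ) :
    Ex f g h = ∑ b, (∏ i, f i (b i)) * ∑ s, (∏ j, g j (s j)) * h b s := by
  simp only [Ex, mul_sum, mul_assoc]

lemma Ex_eq_sum_prod_mul' (h : ProfileB K → ProfileS K' → ℝ) :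
    Ex f g h = ∑ s, (∏ j, g j (s j)) * ∑ b, (∏ i, f i (b i)) * h b s := by
  rw [Ex, sum_comm]
  simp only [mul_sum, mul_comm, mul_assoc]

lemma Ex_sum_updateB (i : Fin n) (hf1 : ∑ t, f i t = 1) (H : ProfileB K → ProfileS K' → ℝ) :
    Ex f g (fun b s => ∑ t, f i t * H (Function.update b i t) s) = Ex f g H := by
  rw [Ex_eq_sum_prod_mul, Ex_eq_sum_prod_mul,
    ← sum_prod_mul_sum_update f i hf1 fun b => ∑ s, (∏ j, g j (s j)) * H b s]
  refine sum_congr rfl fun b _ => congrArg _ ?_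
  simp only [mul_sum]
  rw [sum_comm]
  exact sum_congr rfl fun t _ => sum_congr rfl fun s _ => by ring

lemma Ex_sum_updateS (j : Fin m) (hg1 : ∑ t, g j t = 1) (H : ProfileB K → ProfileS K' → ℝ) :
    Ex f g (fun b s => ∑ t, g j t * H b (Function.update s j t)) = Ex f g H := by
  rw [Ex_eq_sum_prod_mul', Ex_eq_sum_prod_mul',
    ← sum_prod_mul_sum_update g j hg1 fun s => ∑ b, (∏ i, f i (b i)) * H b s]
  refine sum_congr rfl fun s _ => congrArg _ ?_
  simp only [mul_sum]
  rw [sum_comm]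
  exact sum_congr rfl fun t _ => sum_congr rfl fun b _ => by ring

lemma Ex_eq_sum_mul_Ex_updateB (i : Fin n) (hf1 : ∑ t, f i t = 1)
    (H : Fin (K i) → ProfileB K → ProfileS K' → ℝ) :
    Ex f g (fun b s => H (b i) b s)
      = ∑ t, f i t * Ex f g (fun b s => H t (Function.update b i t) s) := by
  rw [← Ex_sum_updateB f g i hf1]
  simp only [Function.update_self, Ex_sum, Ex_const_mul]

lemma Ex_eq_sum_mul_Ex_updateS (j : Fin m) (hg1 : ∑ t, g j t = 1)
    (H : Fin (K' j) → ProfileB K → ProfileS K' → ℝ) :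
    Ex f g (fun b s => H (s j) b s)
      = ∑ t, g j t * Ex f g (fun b s => H t b (Function.update s j t)) := by
  rw [← Ex_sum_updateS f g j hg1]
  simp only [Function.update_self, Ex_sum, Ex_const_mul]

end Expectation

lemma sum_add_ite_of_mem {E : Type*} {P : E → Prop} [DecidablePred P] {M : Finset E}
    (hP : ∀ e ∈ M, ∀ e' ∈ M, P e → P e' → e = e') {e₀ : E} (he₀ : e₀ ∈ M)
    (hPe₀ : P e₀) (w : E → ℝ) (c : ℝ) :
    ∑ e ∈ M, (w e + if P e then c else 0) = ∑ e ∈ M, w e + c := by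
  rw [sum_add_distrib, sum_eq_single_of_mem e₀ he₀ fun e he hne => if_neg fun hPe =>
    hne (hP e he e₀ he₀ hPe hPe₀), if_pos hPe₀]

lemma sum_add_ite_of_forall_not {E : Type*} {P : E → Prop} [DecidablePred P] {M : Finset E}
    (hM : ∀ e ∈ M, ¬ P e) (w : E → ℝ) (c : ℝ) :
    ∑ e ∈ M, (w e + if P e then c else 0) = ∑ e ∈ M, w e :=
  sum_congr rfl fun e he => by rw [if_neg (hM e he), add_zero]

section MaxWeight

variable {E : Type*} [Fintype E]

lemma exists_max_weight {F : Set (Finset E)} (hF : F.Nonempty) (w : E → ℝ) :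
    ∃ M ∈ F, ∀ N ∈ F, ∑ e ∈ N, w e ≤ ∑ e ∈ M, w e :=
  Set.exists_max_image F _ (Set.toFinite F) hF

noncomputable def maxWeight (F : Set (Finset E)) (hF : F.Nonempty) (w : E → ℝ) : Finset E :=
  (exists_max_weight hF w).choose

variable {F : Set (Finset E)} (hF : F.Nonempty)

lemma maxWeight_mem (w : E → ℝ) : maxWeight F hF w ∈ F :=
  (exists_max_weight hF w).choose_spec.1

lemma sum_le_sum_maxWeight (w : E → ℝ) {N : Finset E} (hN : N ∈ F) :
    ∑ e ∈ N, w e ≤ ∑ e ∈ maxWeight F hF w, w e :=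
  (exists_max_weight hF w).choose_spec.2 N hN

lemma sum_mul_le_sum_maxWeight [DecidableEq E] {x : E → ℝ} (γ : Finset E → ℝ)
    (hγ0 : ∀ M, 0 ≤ γ M) (hγF : ∀ M, γ M ≠ 0 → M ∈ F) (hγ1 : ∑ M, γ M = 1)
    (hx : ∀ e, x e = ∑ M, γ M * if e ∈ M then 1 else 0) (w : E → ℝ) :
    ∑ e, x e * w e ≤ ∑ e ∈ maxWeight F hF w, w e :=
  calc ∑ e, x e * w e = ∑ M, γ M * ∑ e ∈ M, w e := by
        simp only [hx, sum_mul]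
        rw [sum_comm]
        refine sum_congr rfl fun M _ => ?_
        simp only [mul_ite, mul_one, mul_zero, ite_mul, zero_mul, ← sum_filter,
          filter_mem_eq_inter, univ_inter, mul_sum]
    _ ≤ ∑ M, γ M * ∑ e ∈ maxWeight F hF w, w e := by
        refine sum_le_sum fun M _ => ?_
        rcases eq_or_ne (γ M) 0 with h | h
        · simp [h]
        · exact mul_le_mul_of_nonneg_left (sum_le_sum_maxWeight hF w (hγF M h)) (hγ0 M)
    _ = ∑ e ∈ maxWeight F hF w, w e := by rw [← sum_mul, hγ1, one_mul]

variable {P : E → Prop} [DecidablePred P]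

/-- Ties are harmless: `maxWeight` is a function of the weights, so a zero raise changes
nothing. -/
lemma exists_mem_maxWeight_of_le
    (hP : ∀ M ∈ F, ∀ e ∈ M, ∀ e' ∈ M, P e → P e' → e = e')
    {w w' : E → ℝ} {δ : ℝ} (hδ : 0 ≤ δ) (hw' : ∀ e, w' e = w e + if P e then δ else 0)
    (h : ∃ e ∈ maxWeight F hF w, P e) : ∃ e ∈ maxWeight F hF w', P e := by
  by_contra! hn
  obtain ⟨e₀, he₀, hPe₀⟩ := h
  have hM := sum_add_ite_of_mem (hP _ (maxWeight_mem hF w)) he₀ hPe₀ w δ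
  have hM' := sum_add_ite_of_forall_not hn w δ
  simp only [← hw'] at hM hM'
  have h₁ := sum_le_sum_maxWeight hF w' (maxWeight_mem hF w)
  have h₂ := sum_le_sum_maxWeight hF w (maxWeight_mem hF w')
  have hww' : w' = w := funext fun e => by
    rw [hw', le_antisymm (by linarith) hδ, ite_self, add_zero]
  exact hn e₀ (hww' ▸ he₀) hPe₀

lemma le_add_of_mem_maxWeight (hP : ∀ M ∈ F, ∀ e ∈ M, ∀ e' ∈ M, P e → P e' → e = e')
    (hdc : ∀ M ∈ F, ∀ M' ⊆ M, M' ∈ F) {w w' : E → ℝ} {c : ℝ}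
    (hw' : ∀ e, w' e = w e + if P e then c else 0) {e₀ : E} (he₀ : e₀ ∈ maxWeight F hF w)
    (hPe₀ : P e₀) (h' : ∃ e ∈ maxWeight F hF w', P e) : 0 ≤ w e₀ + c := by
  obtain ⟨e₁, he₁, hPe₁⟩ := h'
  set M := maxWeight F hF w
  set N := M.filter fun e => ¬ P e
  have hN : N ∈ F := hdc M (maxWeight_mem hF w) N (filter_subset _ _)
  have hMN : ∑ e ∈ M, w e = w e₀ + ∑ e ∈ N, w e := by
    rw [← sum_filter_add_sum_filter_not M P,
      sum_eq_single_of_mem e₀ (mem_filter.2 ⟨he₀, hPe₀⟩) fun e he hne =>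
        absurd (hP M (maxWeight_mem hF w) e (mem_filter.1 he).1 e₀ he₀
          (mem_filter.1 he).2 hPe₀) hne]
  have hM' := sum_add_ite_of_mem (hP _ (maxWeight_mem hF w')) he₁ hPe₁ w c
  have hN' := sum_add_ite_of_forall_not (M := N) (fun e he => (mem_filter.1 he).2) w c
  simp only [← hw'] at hM' hN'
  have h₁ := sum_le_sum_maxWeight hF w' hN
  have h₂ := sum_le_sum_maxWeight hF w (maxWeight_mem hF w')
  linarith

end MaxWeight

lemma sum_ite_exists_mem_fst {α β : Type*} [Fintype α] [DecidableEq α] {M : Finset (α × β)}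
    [∀ a, Decidable (∃ b, (a, b) ∈ M)] (hM : Set.InjOn Prod.fst (M : Set (α × β)))
    (h : α → ℝ) :
    ∑ a, (if ∃ b, (a, b) ∈ M then h a else 0) = ∑ e ∈ M, h e.1 := by
  rw [← sum_filter, ← sum_image hM]
  congr 1
  ext a
  simp

lemma sum_ite_exists_mem_snd {α β : Type*} [Fintype β] [DecidableEq β] {M : Finset (α × β)}
    [∀ b, Decidable (∃ a, (a, b) ∈ M)] (hM : Set.InjOn Prod.snd (M : Set (α × β)))
    (h : β → ℝ) :
    ∑ b, (if ∃ a, (a, b) ∈ M then h b else 0) = ∑ e ∈ M, h e.2 := by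
  rw [← sum_filter, ← sum_image hM]
  congr 1
  ext b
  simp

lemma injOn_fst_of_matching {α β : Type*} {M : Finset (α × β)}
    (hM : ∀ e ∈ M, ∀ e' ∈ M, e ≠ e' → e.1 ≠ e'.1 ∧ e.2 ≠ e'.2) :
    Set.InjOn Prod.fst (M : Set (α × β)) :=
  fun e he e' he' h => by_contra fun hne => (hM e he e' he' hne).1 h

lemma injOn_snd_of_matching {α β : Type*} {M : Finset (α × β)}
    (hM : ∀ e ∈ M, ∀ e' ∈ M, e ≠ e' → e.1 ≠ e'.1 ∧ e.2 ≠ e'.2) :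
    Set.InjOn Prod.snd (M : Set (α × β)) :=
  fun e he e' he' h => by_contra fun hne => (hM e he e' he' hne).2 h

lemma eq_of_fst_eq {α β : Type*} {M : Set (α × β)} (hM : Set.InjOn Prod.fst M) (a : α) :
    ∀ e ∈ M, ∀ e' ∈ M, e.1 = a → e'.1 = a → e = e' :=
  fun _ he _ he' h h' => hM he he' (h.trans h'.symm)

lemma eq_of_snd_eq {α β : Type*} {M : Set (α × β)} (hM : Set.InjOn Prod.snd M) (b : β) :
    ∀ e ∈ M, ∀ e' ∈ M, e.2 = b → e'.2 = b → e = e' :=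
  fun _ he _ he' h h' => hM he he' (h.trans h'.symm)

section Mechanism

-- The allocation maximizes the weights `VB`, `VS` (true or virtual values), while the
-- threshold payments are quoted in the true values `vB`, `vS`.
variable (VB : ∀ i, Fin (K i) → ℝ) (VS : ∀ j, Fin (K' j) → ℝ)
  (F : Set (Finset (Fin n × Fin m))) (hF : F.Nonempty)

def tradeWeight (b : ProfileB K) (s : ProfileS K') (e : Fin n × Fin m) : ℝ :=
  VB e.1 (b e.1) - VS e.2 (s e.2)

noncomputable def alloc (b : ProfileB K) (s : ProfileS K') : Finset (Fin n × Fin m) :=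
  maxWeight F hF (tradeWeight VB VS b s)

noncomputable def winB (i : Fin n) (b : ProfileB K) (s : ProfileS K') : Finset (Fin (K i)) :=
  univ.filter fun t => ∃ j, (i, j) ∈ alloc VB VS F hF (Function.update b i t) s

noncomputable def winS (j : Fin m) (b : ProfileB K) (s : ProfileS K') : Finset (Fin (K' j)) :=
  univ.filter fun t => ∃ i, (i, j) ∈ alloc VB VS F hF b (Function.update s j t)

noncomputable def payB (vB : ∀ i, Fin (K i) → ℝ) (i : Fin n) (b : ProfileB K)
    (s : ProfileS K') : ℝ :=
  thresholdPriceB (vB i) (winB VB VS F hF i b s) (b i)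

noncomputable def payS (vS : ∀ j, Fin (K' j) → ℝ) (j : Fin m) (b : ProfileB K)
    (s : ProfileS K') : ℝ :=
  thresholdPriceS (vS j) (winS VB VS F hF j b s) (s j)

lemma tradeWeight_updateB (b : ProfileB K) (s : ProfileS K') (i : Fin n) (t : Fin (K i))
    (e : Fin n × Fin m) : tradeWeight VB VS (Function.update b i t) s e
      = tradeWeight VB VS b s e + if e.1 = i then VB i t - VB i (b i) else 0 := by
  unfold tradeWeight
  split_ifs with h
  · subst h; simp only [Function.update_self]; ring
  · rw [Function.update_of_ne h, add_zero]

lemma tradeWeight_updateS (b : ProfileB K) (s : ProfileS K') (j : Fin m) (t : Fin (K' j))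
    (e : Fin n × Fin m) : tradeWeight VB VS b (Function.update s j t) e
      = tradeWeight VB VS b s e + if e.2 = j then VS j (s j) - VS j t else 0 := by
  unfold tradeWeight
  split_ifs with h
  · subst h; simp only [Function.update_self]; ring
  · rw [Function.update_of_ne h, add_zero]

lemma winB_update (i : Fin n) (b : ProfileB K) (s : ProfileS K') (t : Fin (K i)) :
    winB VB VS F hF i (Function.update b i t) s = winB VB VS F hF i b s := by
  simp [winB]

lemma winS_update (j : Fin m) (b : ProfileB K) (s : ProfileS K') (t : Fin (K' j)) :
    winS VB VS F hF j b (Function.update s j t) = winS VB VS F hF j b s := by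
  simp [winS]

lemma self_mem_winB {i : Fin n} {b : ProfileB K} {s : ProfileS K'} :
    b i ∈ winB VB VS F hF i b s ↔ ∃ j, (i, j) ∈ alloc VB VS F hF b s := by
  simp [winB]

lemma self_mem_winS {j : Fin m} {b : ProfileB K} {s : ProfileS K'} :
    s j ∈ winS VB VS F hF j b s ↔ ∃ i, (i, j) ∈ alloc VB VS F hF b s := by
  simp [winS]

lemma detXB_alloc (i : Fin n) (b : ProfileB K) (s : ProfileS K') :
    detXB (alloc VB VS F hF) i b s = if b i ∈ winB VB VS F hF i b s then 1 else 0 :=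
  if_congr (self_mem_winB VB VS F hF).symm rfl rfl

lemma detXS_alloc (j : Fin m) (b : ProfileB K) (s : ProfileS K') :
    detXS (alloc VB VS F hF) j b s = if s j ∈ winS VB VS F hF j b s then 1 else 0 :=
  if_congr (self_mem_winS VB VS F hF).symm rfl rfl

variable {VB VS F}

lemma alloc_mem (b : ProfileB K) (s : ProfileS K') : alloc VB VS F hF b s ∈ F :=
  maxWeight_mem hF _

lemma isUpperSet_winB (hfst : ∀ M ∈ F, Set.InjOn Prod.fst (M : Set (Fin n × Fin m)))
    {i : Fin n} (hVB : Monotone (VB i)) (b : ProfileB K) (s : ProfileS K') :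
    IsUpperSet (winB VB VS F hF i b s : Set (Fin (K i))) := by
  intro t t' htt' ht
  simp only [winB, coe_filter, mem_univ, true_and, Set.mem_ofPred_eq] at ht ⊢
  obtain ⟨j, hj⟩ := ht
  obtain ⟨⟨i', j'⟩, he, rfl⟩ := exists_mem_maxWeight_of_le hF
    (fun M hM => eq_of_fst_eq (hfst M hM) i) (sub_nonneg.2 (hVB htt'))
    (fun e => by simpa using tradeWeight_updateB VB VS (Function.update b i t) s i t' e)
    ⟨(i, j), hj, rfl⟩
  exact ⟨j', he⟩

lemma isLowerSet_winS (hsnd : ∀ M ∈ F, Set.InjOn Prod.snd (M : Set (Fin n × Fin m)))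
    {j : Fin m} (hVS : Monotone (VS j)) (b : ProfileB K) (s : ProfileS K') :
    IsLowerSet (winS VB VS F hF j b s : Set (Fin (K' j))) := by
  intro t t' htt' ht
  simp only [winS, coe_filter, mem_univ, true_and, Set.mem_ofPred_eq] at ht ⊢
  obtain ⟨i, hi⟩ := ht
  obtain ⟨⟨i', j'⟩, he, rfl⟩ := exists_mem_maxWeight_of_le hF
    (fun M hM => eq_of_snd_eq (hsnd M hM) j) (sub_nonneg.2 (hVS htt'))
    (fun e => by simpa using tradeWeight_updateS VB VS b (Function.update s j t) j t' e)
    ⟨(i, j), hi, rfl⟩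
  exact ⟨i', he⟩

variable {vB : ∀ i, Fin (K i) → ℝ} {vS : ∀ j, Fin (K' j) → ℝ}

lemma alloc_dsicB (hfst : ∀ M ∈ F, Set.InjOn Prod.fst (M : Set (Fin n × Fin m))) {i : Fin n}
    (hvB : Monotone (vB i)) (hVB : Monotone (VB i)) (b : ProfileB K) (s : ProfileS K')
    (t' : Fin (K i)) :
    vB i (b i) * detXB (alloc VB VS F hF) i (Function.update b i t') s
        - payB VB VS F hF vB i (Function.update b i t') s
      ≤ vB i (b i) * detXB (alloc VB VS F hF) i b s - payB VB VS F hF vB i b s := by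
  simpa only [detXB_alloc, payB, winB_update, Function.update_self] using
    thresholdPriceB_truthful hvB (isUpperSet_winB hF hfst hVB b s) (b i) t'

lemma alloc_dsicS (hsnd : ∀ M ∈ F, Set.InjOn Prod.snd (M : Set (Fin n × Fin m))) {j : Fin m}
    (hvS : Monotone (vS j)) (hVS : Monotone (VS j)) (b : ProfileB K) (s : ProfileS K')
    (t' : Fin (K' j)) :
    payS VB VS F hF vS j b (Function.update s j t')
        - vS j (s j) * detXS (alloc VB VS F hF) j b (Function.update s j t')
      ≤ payS VB VS F hF vS j b s - vS j (s j) * detXS (alloc VB VS F hF) j b s := by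
  simpa only [detXS_alloc, payS, winS_update, Function.update_self] using
    thresholdPriceS_truthful hvS (isLowerSet_winS hF hsnd hVS b s) (s j) t'

lemma alloc_irB {i : Fin n} (hvB : Monotone (vB i)) (b : ProfileB K) (s : ProfileS K') :
    0 ≤ vB i (b i) * detXB (alloc VB VS F hF) i b s - payB VB VS F hF vB i b s := by
  rw [detXB_alloc, sub_nonneg]
  exact thresholdPriceB_le hvB (b i)

lemma alloc_irS {j : Fin m} (hvS : Monotone (vS j)) (b : ProfileB K) (s : ProfileS K') :
    0 ≤ payS VB VS F hF vS j b s - vS j (s j) * detXS (alloc VB VS F hF) j b s := by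
  rw [detXS_alloc, sub_nonneg]
  exact le_thresholdPriceS hvS (s j)

/-- With his threshold report the buyer still trades, so his current edge keeps a
nonnegative weight after the shift to that report. -/
lemma le_payB (hfst : ∀ M ∈ F, Set.InjOn Prod.fst (M : Set (Fin n × Fin m)))
    (hdc : ∀ M ∈ F, ∀ M' ⊆ M, M' ∈ F) {i : Fin n} {j : Fin m}
    (hVBle : ∀ t, VB i t ≤ vB i t)
    {b : ProfileB K} {s : ProfileS K'} (he : (i, j) ∈ alloc VB VS F hF b s) :
    VS j (s j) ≤ payB VB VS F hF vB i b s := by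
  have hb : b i ∈ winB VB VS F hF i b s := (self_mem_winB VB VS F hF).2 ⟨j, he⟩
  obtain ⟨j₁, hj₁⟩ := (mem_filter.1 ((winB VB VS F hF i b s).min'_mem ⟨_, hb⟩)).2
  have := le_add_of_mem_maxWeight hF (fun M hM => eq_of_fst_eq (hfst M hM) i) hdc
    (tradeWeight_updateB VB VS b s i _) he rfl ⟨(i, j₁), hj₁, rfl⟩
  simp only [tradeWeight] at this
  rw [payB, thresholdPriceB, dif_pos hb]
  linarith [hVBle ((winB VB VS F hF i b s).min' ⟨_, hb⟩)]

lemma payS_le (hsnd : ∀ M ∈ F, Set.InjOn Prod.snd (M : Set (Fin n × Fin m)))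
    (hdc : ∀ M ∈ F, ∀ M' ⊆ M, M' ∈ F) {i : Fin n} {j : Fin m}
    (hVSge : ∀ t, vS j t ≤ VS j t)
    {b : ProfileB K} {s : ProfileS K'} (he : (i, j) ∈ alloc VB VS F hF b s) :
    payS VB VS F hF vS j b s ≤ VB i (b i) := by
  have hs : s j ∈ winS VB VS F hF j b s := (self_mem_winS VB VS F hF).2 ⟨i, he⟩
  obtain ⟨i₁, hi₁⟩ := (mem_filter.1 ((winS VB VS F hF j b s).max'_mem ⟨_, hs⟩)).2
  have := le_add_of_mem_maxWeight hF (fun M hM => eq_of_snd_eq (hsnd M hM) j) hdc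
    (tradeWeight_updateS VB VS b s j _) he rfl ⟨(i₁, j), hi₁, rfl⟩
  simp only [tradeWeight] at this
  rw [payS, thresholdPriceS, dif_pos hs]
  linarith [hVSge ((winS VB VS F hF j b s).max' ⟨_, hs⟩)]

lemma sum_le_sum_payB (hfst : ∀ M ∈ F, Set.InjOn Prod.fst (M : Set (Fin n × Fin m)))
    (hdc : ∀ M ∈ F, ∀ M' ⊆ M, M' ∈ F) (hVBle : ∀ i t, VB i t ≤ vB i t)
    (b : ProfileB K) (s : ProfileS K') :
    ∑ e ∈ alloc VB VS F hF b s, VS e.2 (s e.2) ≤ ∑ i, payB VB VS F hF vB i b s := by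
  have hpay (i : Fin n) : payB VB VS F hF vB i b s
      = if ∃ j, (i, j) ∈ alloc VB VS F hF b s then payB VB VS F hF vB i b s else 0 := by
    split_ifs with h
    · rfl
    · exact dif_neg (mt (self_mem_winB VB VS F hF).1 h)
  rw [sum_congr rfl fun i _ => hpay i, sum_ite_exists_mem_fst (hfst _ (alloc_mem hF b s))]
  exact sum_le_sum fun e he => le_payB hF hfst hdc (hVBle e.1) he

lemma sum_payS_le (hsnd : ∀ M ∈ F, Set.InjOn Prod.snd (M : Set (Fin n × Fin m)))
    (hdc : ∀ M ∈ F, ∀ M' ⊆ M, M' ∈ F) (hVSge : ∀ j t, vS j t ≤ VS j t)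
    (b : ProfileB K) (s : ProfileS K') :
    ∑ j, payS VB VS F hF vS j b s ≤ ∑ e ∈ alloc VB VS F hF b s, VB e.1 (b e.1) := by
  have hpay (j : Fin m) : payS VB VS F hF vS j b s
      = if ∃ i, (i, j) ∈ alloc VB VS F hF b s then payS VB VS F hF vS j b s else 0 := by
    split_ifs with h
    · rfl
    · exact dif_neg (mt (self_mem_winS VB VS F hF).1 h)
  rw [sum_congr rfl fun j _ => hpay j, sum_ite_exists_mem_snd (hsnd _ (alloc_mem hF b s))]
  exact sum_le_sum fun e he => payS_le hF hsnd hdc (hVSge e.2) he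

end Mechanism

section BudgetBalance

variable {VB : ∀ i, Fin (K i) → ℝ} {VS : ∀ j, Fin (K' j) → ℝ}
  {F : Set (Finset (Fin n × Fin m))} (hF : F.Nonempty)
  (f : ∀ i, Fin (K i) → ℝ) (g : ∀ j, Fin (K' j) → ℝ)
  {vB : ∀ i, Fin (K i) → ℝ} {vS : ∀ j, Fin (K' j) → ℝ}

lemma Ex_payB (hfst : ∀ M ∈ F, Set.InjOn Prod.fst (M : Set (Fin n × Fin m))) {i : Fin n}
    (hf : ∀ t, 0 < f i t) (hf1 : ∑ t, f i t = 1) (hVB : Monotone (VB i)) :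
    Ex f g (payB VB VS F hF vB i) = Ex f g fun b s =>
      if b i ∈ winB VB VS F hF i b s then phi (K i) (vB i) (f i) (b i) else 0 := by
  refine (Ex_sum_updateB f g i hf1 _).symm.trans (Eq.trans ?_ (Ex_sum_updateB f g i hf1 _))
  congr 1
  funext b s
  simp only [payB, winB_update, Function.update_self, mul_ite, mul_zero]
  rw [sum_mul_thresholdPriceB (vB i) (fun t => (hf t).ne') (isUpperSet_winB hF hfst hVB b s),
    sum_ite_mem, univ_inter]

lemma Ex_payS (hsnd : ∀ M ∈ F, Set.InjOn Prod.snd (M : Set (Fin n × Fin m))) {j : Fin m}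
    (hg : ∀ t, 0 < g j t) (hg1 : ∑ t, g j t = 1) (hVS : Monotone (VS j)) :
    Ex f g (payS VB VS F hF vS j) = Ex f g fun b s =>
      if s j ∈ winS VB VS F hF j b s then tau (K' j) (vS j) (g j) (s j) else 0 := by
  refine (Ex_sum_updateS f g j hg1 _).symm.trans (Eq.trans ?_ (Ex_sum_updateS f g j hg1 _))
  congr 1
  funext b s
  simp only [payS, winS_update, Function.update_self, mul_ite, mul_zero]
  rw [sum_mul_thresholdPriceS (vS j) (fun t => (hg t).ne') (isLowerSet_winS hF hsnd hVS b s),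
    sum_ite_mem, univ_inter]

lemma Ex_sum_payB (hfst : ∀ M ∈ F, Set.InjOn Prod.fst (M : Set (Fin n × Fin m)))
    (hf : ∀ i t, 0 < f i t) (hf1 : ∀ i, ∑ t, f i t = 1) (hVB : ∀ i, Monotone (VB i)) :
    Ex f g (fun b s => ∑ i, payB VB VS F hF vB i b s)
      = Ex f g fun b s =>
          ∑ e ∈ alloc VB VS F hF b s, phi (K e.1) (vB e.1) (f e.1) (b e.1) := by
  rw [Ex_sum]
  simp only [Ex_payB hF f g hfst (hf _) (hf1 _) (hVB _)]
  rw [← Ex_sum]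
  congr 1
  funext b s
  rw [← sum_ite_exists_mem_fst (hfst _ (alloc_mem hF b s)) fun i => phi (K i) (vB i) (f i) (b i)]
  exact sum_congr rfl fun i _ => if_congr (self_mem_winB VB VS F hF) rfl rfl

lemma Ex_sum_payS (hsnd : ∀ M ∈ F, Set.InjOn Prod.snd (M : Set (Fin n × Fin m)))
    (hg : ∀ j t, 0 < g j t) (hg1 : ∀ j, ∑ t, g j t = 1) (hVS : ∀ j, Monotone (VS j)) :
    Ex f g (fun b s => ∑ j, payS VB VS F hF vS j b s)
      = Ex f g fun b s =>
          ∑ e ∈ alloc VB VS F hF b s, tau (K' e.2) (vS e.2) (g e.2) (s e.2) := by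
  rw [Ex_sum]
  simp only [Ex_payS hF f g hsnd (hg _) (hg1 _) (hVS _)]
  rw [← Ex_sum]
  congr 1
  funext b s
  rw [← sum_ite_exists_mem_snd (hsnd _ (alloc_mem hF b s)) fun j => tau (K' j) (vS j) (g j) (s j)]
  exact sum_congr rfl fun j _ => if_congr (self_mem_winS VB VS F hF) rfl rfl

variable {f g}

lemma wbb_alloc_phi (hfst : ∀ M ∈ F, Set.InjOn Prod.fst (M : Set (Fin n × Fin m)))
    (hsnd : ∀ M ∈ F, Set.InjOn Prod.snd (M : Set (Fin n × Fin m)))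
    (hdc : ∀ M ∈ F, ∀ M' ⊆ M, M' ∈ F)
    (hf : ∀ i t, 0 < f i t) (hf1 : ∀ i, ∑ t, f i t = 1) (hg : ∀ j t, 0 < g j t)
    (hregB : ∀ i, Monotone (phi (K i) (vB i) (f i))) (hVS : ∀ j t, vS j t ≤ VS j t) :
    0 ≤ Ex f g fun b s => (∑ i, payB (fun i => phi (K i) (vB i) (f i)) VS F hF vB i b s)
      - ∑ j, payS (fun i => phi (K i) (vB i) (f i)) VS F hF vS j b s := by
  rw [Ex_sub, Ex_sum_payB hF f g hfst hf hf1 hregB, sub_nonneg]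
  exact Ex_mono (fun i t => (hf i t).le) (fun j t => (hg j t).le) (sum_payS_le hF hsnd hdc hVS)

lemma wbb_alloc_tau (hfst : ∀ M ∈ F, Set.InjOn Prod.fst (M : Set (Fin n × Fin m)))
    (hsnd : ∀ M ∈ F, Set.InjOn Prod.snd (M : Set (Fin n × Fin m)))
    (hdc : ∀ M ∈ F, ∀ M' ⊆ M, M' ∈ F)
    (hf : ∀ i t, 0 < f i t) (hg : ∀ j t, 0 < g j t) (hg1 : ∀ j, ∑ t, g j t = 1)
    (hregS : ∀ j, Monotone (tau (K' j) (vS j) (g j))) (hVB : ∀ i t, VB i t ≤ vB i t) :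
    0 ≤ Ex f g fun b s => (∑ i, payB VB (fun j => tau (K' j) (vS j) (g j)) F hF vB i b s)
      - ∑ j, payS VB (fun j => tau (K' j) (vS j) (g j)) F hF vS j b s := by
  rw [Ex_sub, Ex_sum_payS hF f g hsnd hg hg1 hregS, sub_nonneg]
  exact Ex_mono (fun i t => (hf i t).le) (fun j t => (hg j t).le) (sum_le_sum_payB hF hfst hdc hVB)

end BudgetBalance

lemma sum_mul_sum_comm {ι κ : Type*} [Fintype ι] [Fintype κ] (c : κ → ℝ)
    (y : ι → κ → ℝ) :
    ∑ j, c j * ∑ i, y i j = ∑ i, ∑ j, y i j * c j := by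
  simp only [mul_sum]
  rw [sum_comm]
  simp only [mul_comm]

section Benchmark

variable (f : ∀ i, Fin (K i) → ℝ) (g : ∀ j, Fin (K' j) → ℝ)
  (x : ProfileB K → ProfileS K' → Fin n × Fin m → ℝ)

noncomputable def gft (VB : ∀ i, Fin (K i) → ℝ) (VS : ∀ j, Fin (K' j) → ℝ) : ℝ :=
  Ex f g fun b s => ∑ i, ∑ j, x b s (i, j) * (VB i (b i) - VS j (s j))

variable (vB : ∀ i, Fin (K i) → ℝ) (vS : ∀ j, Fin (K' j) → ℝ)
  (pB : Fin n → ProfileB K → ProfileS K' → ℝ)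
  (pS : Fin m → ProfileB K → ProfileS K' → ℝ)

lemma utilB_eq (i : Fin n) (t t' : Fin (K i)) :
    utilB vB f g x pB i t t'
      = vB i t * Ex f g (fun b s => ∑ j, x (Function.update b i t') s (i, j))
        - Ex f g (fun b s => pB i (Function.update b i t') s) := by
  rw [utilB, Ex_sub, Ex_const_mul]

lemma utilS_eq (j : Fin m) (t t' : Fin (K' j)) :
    utilS vS f g x pS j t t'
      = Ex f g (fun b s => pS j b (Function.update s j t'))
        - vS j t * Ex f g (fun b s => ∑ i, x b (Function.update s j t') (i, j)) := by
  rw [utilS, Ex_sub, Ex_const_mul]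

lemma sum_mul_utilB_self {i : Fin n} (hf1 : ∑ t, f i t = 1) :
    ∑ t, f i t * utilB vB f g x pB i t t
      = Ex f g fun b s => vB i (b i) * ∑ j, x b s (i, j) - pB i b s :=
  (Ex_eq_sum_mul_Ex_updateB f g i hf1 fun t b s => vB i t * ∑ j, x b s (i, j) - pB i b s).symm

lemma sum_mul_utilS_self {j : Fin m} (hg1 : ∑ t, g j t = 1) :
    ∑ t, g j t * utilS vS f g x pS j t t
      = Ex f g fun b s => pS j b s - vS j (s j) * ∑ i, x b s (i, j) :=
  (Ex_eq_sum_mul_Ex_updateS f g j hg1 fun t b s => pS j b s - vS j t * ∑ i, x b s (i, j)).symm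

lemma gft_eq_gft_add_sum_Ex_sub_mul (VB : ∀ i, Fin (K i) → ℝ) :
    gft f g x vB vS = gft f g x VB vS
      + ∑ i, Ex f g fun b s => (vB i (b i) - VB i (b i)) * ∑ j, x b s (i, j) := by
  rw [gft, gft, ← Ex_sum, ← Ex_add]
  congr 1
  funext b s
  simp only [mul_sum, ← sum_add_distrib]
  exact sum_congr rfl fun i _ => sum_congr rfl fun j _ => by ring

lemma gft_eq_gft_add_sum_Ex_sub_mul' (VS : ∀ j, Fin (K' j) → ℝ) :
    gft f g x vB vS = gft f g x vB VS
      + ∑ j, Ex f g fun b s => (VS j (s j) - vS j (s j)) * ∑ i, x b s (i, j) := by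
  rw [gft, gft, ← Ex_sum, ← Ex_add]
  congr 1
  funext b s
  rw [sum_mul_sum_comm, ← sum_add_distrib]
  exact sum_congr rfl fun i _ => by
    rw [← sum_add_distrib]
    exact sum_congr rfl fun j _ => by ring

lemma sum_utilB_add_sum_utilS (hf1 : ∀ i, ∑ t, f i t = 1) (hg1 : ∀ j, ∑ t, g j t = 1) :
    (∑ i, ∑ t, f i t * utilB vB f g x pB i t t) + ∑ j, ∑ t, g j t * utilS vS f g x pS j t t
      = gft f g x vB vS - Ex f g fun b s => (∑ i, pB i b s) - ∑ j, pS j b s := by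
  simp only [sum_mul_utilB_self f g x vB pB (hf1 _), sum_mul_utilS_self f g x vS pS (hg1 _)]
  rw [← Ex_sum, ← Ex_sum, ← Ex_add, gft, ← Ex_sub]
  congr 1
  funext b s
  simp only [sum_sub_distrib, mul_sub]
  rw [sum_mul_sum_comm (fun j => vS j (s j)) fun i j => x b s (i, j)]
  simp only [mul_sum]
  simp only [mul_comm (vB _ _)]
  ring

variable {f g x vB vS pB pS}

lemma Ex_rentB_le {i : Fin n} (hf : ∀ t, 0 < f i t) (hf1 : ∑ t, f i t = 1)
    (hBIC : ∀ t t', utilB vB f g x pB i t t' ≤ utilB vB f g x pB i t t)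
    (hIR : ∀ t, 0 ≤ utilB vB f g x pB i t t) :
    Ex f g (fun b s => (vB i (b i) - phi (K i) (vB i) (f i) (b i)) * ∑ j, x b s (i, j))
      ≤ ∑ t, f i t * utilB vB f g x pB i t t := by
  rw [Ex_eq_sum_mul_Ex_updateB f g i hf1
    fun t b s => (vB i t - phi (K i) (vB i) (f i) t) * ∑ j, x b s (i, j)]
  simp only [Ex_const_mul]
  refine sum_mul_sub_phi_mul_le hf _ _ hIR fun t ht => ?_
  have := hBIC ⟨t + 1, ht⟩ t
  rw [utilB_eq f g x vB pB i _ t] at this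
  rw [utilB_eq f g x vB pB i t t]
  linarith

lemma Ex_rentS_le {j : Fin m} (hg : ∀ t, 0 < g j t) (hg1 : ∑ t, g j t = 1)
    (hBIC : ∀ t t', utilS vS f g x pS j t t' ≤ utilS vS f g x pS j t t)
    (hIR : ∀ t, 0 ≤ utilS vS f g x pS j t t) :
    Ex f g (fun b s => (tau (K' j) (vS j) (g j) (s j) - vS j (s j)) * ∑ i, x b s (i, j))
      ≤ ∑ t, g j t * utilS vS f g x pS j t t := by
  rw [Ex_eq_sum_mul_Ex_updateS f g j hg1
    fun t b s => (tau (K' j) (vS j) (g j) t - vS j t) * ∑ i, x b s (i, j)]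
  simp only [Ex_const_mul]
  refine sum_mul_tau_sub_mul_le hg _ _ hIR fun t ht => ?_
  have := hBIC ⟨t - 1, Nat.lt_of_le_of_lt (Nat.sub_le _ _) t.isLt⟩ t
  rw [utilS_eq f g x vS pS j _ t] at this
  rw [utilS_eq f g x vS pS j t t]
  linarith

theorem gft_le_add_gft (hf : ∀ i t, 0 < f i t) (hf1 : ∀ i, ∑ t, f i t = 1)
    (hg : ∀ j t, 0 < g j t) (hg1 : ∀ j, ∑ t, g j t = 1)
    (hBICB : ∀ i t t', utilB vB f g x pB i t t' ≤ utilB vB f g x pB i t t)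
    (hBICS : ∀ j t t', utilS vS f g x pS j t t' ≤ utilS vS f g x pS j t t)
    (hIRB : ∀ i t, 0 ≤ utilB vB f g x pB i t t) (hIRS : ∀ j t, 0 ≤ utilS vS f g x pS j t t)
    (hWBB : 0 ≤ Ex f g fun b s => (∑ i, pB i b s) - ∑ j, pS j b s) :
    gft f g x vB vS ≤ gft f g x (fun i => phi (K i) (vB i) (f i)) vS
      + gft f g x vB (fun j => tau (K' j) (vS j) (g j)) := by
  have hrentB := sum_le_sum fun i (_ : i ∈ univ) => Ex_rentB_le (hf i) (hf1 i) (hBICB i) (hIRB i)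
  have hrentS := sum_le_sum fun j (_ : j ∈ univ) => Ex_rentS_le (hg j) (hg1 j) (hBICS j) (hIRS j)
  linarith [gft_eq_gft_add_sum_Ex_sub_mul f g x vB vS fun i => phi (K i) (vB i) (f i),
    gft_eq_gft_add_sum_Ex_sub_mul' f g x vB vS fun j => tau (K' j) (vS j) (g j),
    sum_utilB_add_sum_utilS f g x vB vS pB pS hf1 hg1]

end Benchmark

lemma gft_le_Ex_alloc {F : Set (Finset (Fin n × Fin m))} (hF : F.Nonempty)
    {f : ∀ i, Fin (K i) → ℝ} {g : ∀ j, Fin (K' j) → ℝ} (hf : ∀ i t, 0 ≤ f i t)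
    (hg : ∀ j t, 0 ≤ g j t) {vB VB : ∀ i, Fin (K i) → ℝ}
    {vS VS : ∀ j, Fin (K' j) → ℝ}
    (hVB : ∀ i t, VB i t ≤ vB i t) (hVS : ∀ j t, vS j t ≤ VS j t)
    {x : ProfileB K → ProfileS K' → Fin n × Fin m → ℝ} (hx : Implementable F x) :
    gft f g x VB VS
      ≤ Ex f g fun b s => ∑ e ∈ alloc VB VS F hF b s, (vB e.1 (b e.1) - vS e.2 (s e.2)) := by
  refine Ex_mono hf hg fun b s => ?_
  obtain ⟨γ, hγ0, hγF, hγ1, hxγ⟩ := hx b s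
  calc ∑ i, ∑ j, x b s (i, j) * (VB i (b i) - VS j (s j))
      = ∑ e, x b s e * tradeWeight VB VS b s e := by rw [Fintype.sum_prod_type]; rfl
    _ ≤ ∑ e ∈ alloc VB VS F hF b s, tradeWeight VB VS b s e :=
        sum_mul_le_sum_maxWeight hF γ hγ0 hγF hγ1 hxγ _
    _ ≤ ∑ e ∈ alloc VB VS F hF b s, (vB e.1 (b e.1) - vS e.2 (s e.2)) :=
        sum_le_sum fun e _ => sub_le_sub (hVB _ _) (hVS _ _)

theorem stmt_10_general
    (n m : ℕ)
    (K : Fin n → ℕ)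
    (K' : Fin m → ℕ)
    (vB : ∀ i, Fin (K i) → ℝ) (hvB : ∀ i, StrictMono (vB i))
    (vS : ∀ j, Fin (K' j) → ℝ) (hvS : ∀ j, StrictMono (vS j))
    (f : ∀ i, Fin (K i) → ℝ) (hf : ∀ i t, 0 < f i t) (hf1 : ∀ i, ∑ t, f i t = 1)
    (g : ∀ j, Fin (K' j) → ℝ) (hg : ∀ j t, 0 < g j t) (hg1 : ∀ j, ∑ t, g j t = 1)
    (hregB : ∀ i, Monotone (phi (K i) (vB i) (f i)))
    (hregS : ∀ j, Monotone (tau (K' j) (vS j) (g j)))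
    (F : Set (Finset (Fin n × Fin m))) (hFne : F.Nonempty)
    (hdc : ∀ M ∈ F, ∀ M' ⊆ M, M' ∈ F)
    (hmatch : ∀ M ∈ F, ∀ e ∈ M, ∀ e' ∈ M, e ≠ e' → e.1 ≠ e'.1 ∧ e.2 ≠ e'.2) :
    ∃ (X : ProfileB K → ProfileS K' → Finset (Fin n × Fin m))
      (pB : Fin n → ProfileB K → ProfileS K' → ℝ)
      (pS : Fin m → ProfileB K → ProfileS K' → ℝ),
      -- feasibility
      (∀ b s, X b s ∈ F) ∧
      -- DSIC for buyers
      (∀ (i : Fin n) (b : ProfileB K) (s : ProfileS K') (t' : Fin (K i)),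
        vB i (b i) * detXB X i (Function.update b i t') s
            - pB i (Function.update b i t') s
          ≤ vB i (b i) * detXB X i b s - pB i b s) ∧
      -- DSIC for sellers
      (∀ (j : Fin m) (b : ProfileB K) (s : ProfileS K') (t' : Fin (K' j)),
        pS j b (Function.update s j t')
            - vS j (s j) * detXS X j b (Function.update s j t')
          ≤ pS j b s - vS j (s j) * detXS X j b s) ∧
      -- ex-post IR
      (∀ (i : Fin n) (b : ProfileB K) (s : ProfileS K'),
        0 ≤ vB i (b i) * detXB X i b s - pB i b s) ∧
      (∀ (j : Fin m) (b : ProfileB K) (s : ProfileS K'),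
        0 ≤ pS j b s - vS j (s j) * detXS X j b s) ∧
      -- ex-ante WBB
      (0 ≤ Ex f g (fun b s => (∑ i, pB i b s) - ∑ j, pS j b s)) ∧
      -- 2·GFT(X) ≥ GFT(M') for every implementable IR, BIC, ex-ante WBB mechanism M'
      (∀ (x' : ProfileB K → ProfileS K' → Fin n × Fin m → ℝ)
         (pB' : Fin n → ProfileB K → ProfileS K' → ℝ)
         (pS' : Fin m → ProfileB K → ProfileS K' → ℝ),
        Implementable F x' →
        (∀ (i : Fin n) (t t' : Fin (K i)),
          utilB vB f g x' pB' i t t' ≤ utilB vB f g x' pB' i t t) →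
        (∀ (j : Fin m) (t t' : Fin (K' j)),
          utilS vS f g x' pS' j t t' ≤ utilS vS f g x' pS' j t t) →
        (∀ (i : Fin n) (t : Fin (K i)), 0 ≤ utilB vB f g x' pB' i t t) →
        (∀ (j : Fin m) (t : Fin (K' j)), 0 ≤ utilS vS f g x' pS' j t t) →
        (0 ≤ Ex f g (fun b s => (∑ i, pB' i b s) - ∑ j, pS' j b s)) →
        Ex f g (fun b s => ∑ i, ∑ j, x' b s (i, j) * (vB i (b i) - vS j (s j)))
          ≤ 2 * Ex f g (fun b s => ∑ e ∈ X b s, (vB e.1 (b e.1) - vS e.2 (s e.2)))) := by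
  have hfst M hM := injOn_fst_of_matching (hmatch M hM)
  have hsnd M hM := injOn_snd_of_matching (hmatch M hM)
  have hphi i t : phi (K i) (vB i) (f i) t ≤ vB i t := phi_le (hvB i).monotone (hf i) t
  have htau j t : vS j t ≤ tau (K' j) (vS j) (g j) t := le_tau (hvS j).monotone (hg j) t
  have hf0 i t := (hf i t).le
  have hg0 j t := (hg j t).le
  have hbound x' pB' pS' (hx : Implementable F x') hBICB hBICS hIRB hIRS hWBB :=
    (gft_le_add_gft (pB := pB') (pS := pS') hf hf1 hg hg1 hBICB hBICS hIRB hIRS hWBB).trans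
      (add_le_add (gft_le_Ex_alloc hFne hf0 hg0 hphi (fun _ _ => le_rfl) hx)
        (gft_le_Ex_alloc hFne hf0 hg0 (fun _ _ => le_rfl) htau hx))
  rcases le_total
    (Ex f g fun b s => ∑ e ∈ alloc vB (fun j => tau (K' j) (vS j) (g j)) F hFne b s,
      (vB e.1 (b e.1) - vS e.2 (s e.2)))
    (Ex f g fun b s => ∑ e ∈ alloc (fun i => phi (K i) (vB i) (f i)) vS F hFne b s,
      (vB e.1 (b e.1) - vS e.2 (s e.2))) with h | h
  · refine ⟨_, payB _ vS F hFne vB, payS _ vS F hFne vS, alloc_mem hFne,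
      fun i => alloc_dsicB hFne hfst (hvB i).monotone (hregB i),
      fun j => alloc_dsicS hFne hsnd (hvS j).monotone (hvS j).monotone,
      fun i => alloc_irB hFne (hvB i).monotone, fun j => alloc_irS hFne (hvS j).monotone,
      wbb_alloc_phi hFne hfst hsnd hdc hf hf1 hg hregB fun _ _ => le_rfl,
      fun x' pB' pS' hx h₁ h₂ h₃ h₄ h₅ =>
        (hbound x' pB' pS' hx h₁ h₂ h₃ h₄ h₅).trans (by linarith)⟩
  · refine ⟨_, payB vB _ F hFne vB, payS vB _ F hFne vS, alloc_mem hFne,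
      fun i => alloc_dsicB hFne hfst (hvB i).monotone (hvB i).monotone,
      fun j => alloc_dsicS hFne hsnd (hvS j).monotone (hregS j),
      fun i => alloc_irB hFne (hvB i).monotone, fun j => alloc_irS hFne (hvS j).monotone,
      wbb_alloc_tau hFne hfst hsnd hdc hf hg hg1 hregS fun _ _ => le_rfl,
      fun x' pB' pS' hx h₁ h₂ h₃ h₄ h₅ =>
        (hbound x' pB' pS' hx h₁ h₂ h₃ h₄ h₅).trans (by linarith)⟩

/-- in a double auction with regular distributions there is a deterministic
feasible allocation `X` and payments making the mechanism DSIC, ex-post IR and ex-ante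
WBB, whose GFT is at least half the GFT of every implementable IR, BIC, ex-ante WBB
mechanism. -/
theorem stmt_10
    (n m : ℕ) (hn : 0 < n) (hm : 0 < m)
    (K : Fin n → ℕ) (hK : ∀ i, 0 < K i)
    (K' : Fin m → ℕ) (hK' : ∀ j, 0 < K' j)
    (vB : ∀ i, Fin (K i) → ℝ) (hvB : ∀ i, StrictMono (vB i))
    (vS : ∀ j, Fin (K' j) → ℝ) (hvS : ∀ j, StrictMono (vS j))
    (f : ∀ i, Fin (K i) → ℝ) (hf : ∀ i t, 0 < f i t) (hf1 : ∀ i, ∑ t, f i t = 1)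
    (g : ∀ j, Fin (K' j) → ℝ) (hg : ∀ j t, 0 < g j t) (hg1 : ∀ j, ∑ t, g j t = 1)
    (hregB : ∀ i, Monotone (phi (K i) (vB i) (f i)))
    (hregS : ∀ j, Monotone (tau (K' j) (vS j) (g j)))
    (F : Set (Finset (Fin n × Fin m))) (hFne : F.Nonempty)
    (hdc : ∀ M ∈ F, ∀ M' ⊆ M, M' ∈ F)
    (hmatch : ∀ M ∈ F, ∀ e ∈ M, ∀ e' ∈ M, e ≠ e' → e.1 ≠ e'.1 ∧ e.2 ≠ e'.2) :
    ∃ (X : ProfileB K → ProfileS K' → Finset (Fin n × Fin m))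
      (pB : Fin n → ProfileB K → ProfileS K' → ℝ)
      (pS : Fin m → ProfileB K → ProfileS K' → ℝ),
      -- feasibility
      (∀ b s, X b s ∈ F) ∧
      -- DSIC for buyers
      (∀ (i : Fin n) (b : ProfileB K) (s : ProfileS K') (t' : Fin (K i)),
        vB i (b i) * detXB X i (Function.update b i t') s
            - pB i (Function.update b i t') s
          ≤ vB i (b i) * detXB X i b s - pB i b s) ∧
      -- DSIC for sellers
      (∀ (j : Fin m) (b : ProfileB K) (s : ProfileS K') (t' : Fin (K' j)),
        pS j b (Function.update s j t')
            - vS j (s j) * detXS X j b (Function.update s j t')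
          ≤ pS j b s - vS j (s j) * detXS X j b s) ∧
      -- ex-post IR
      (∀ (i : Fin n) (b : ProfileB K) (s : ProfileS K'),
        0 ≤ vB i (b i) * detXB X i b s - pB i b s) ∧
      (∀ (j : Fin m) (b : ProfileB K) (s : ProfileS K'),
        0 ≤ pS j b s - vS j (s j) * detXS X j b s) ∧
      -- ex-ante WBB
      (0 ≤ Ex f g (fun b s => (∑ i, pB i b s) - ∑ j, pS j b s)) ∧
      -- 2·GFT(X) ≥ GFT(M') for every implementable IR, BIC, ex-ante WBB mechanism M'
      (∀ (x' : ProfileB K → ProfileS K' → Fin n × Fin m → ℝ)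
         (pB' : Fin n → ProfileB K → ProfileS K' → ℝ)
         (pS' : Fin m → ProfileB K → ProfileS K' → ℝ),
        Implementable F x' →
        (∀ (i : Fin n) (t t' : Fin (K i)),
          utilB vB f g x' pB' i t t' ≤ utilB vB f g x' pB' i t t) →
        (∀ (j : Fin m) (t t' : Fin (K' j)),
          utilS vS f g x' pS' j t t' ≤ utilS vS f g x' pS' j t t) →
        (∀ (i : Fin n) (t : Fin (K i)), 0 ≤ utilB vB f g x' pB' i t t) →
        (∀ (j : Fin m) (t : Fin (K' j)), 0 ≤ utilS vS f g x' pS' j t t) →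
        (0 ≤ Ex f g (fun b s => (∑ i, pB' i b s) - ∑ j, pS' j b s)) →
        Ex f g (fun b s => ∑ i, ∑ j, x' b s (i, j) * (vB i (b i) - vS j (s j)))
          ≤ 2 * Ex f g (fun b s => ∑ e ∈ X b s, (vB e.1 (b e.1) - vS e.2 (s e.2)))) :=
  stmt_10_general n m K K' vB hvB vS hvS f hf hf1 g hg hg1 hregB hregS F hFne hdc hmatch

end Stmt10
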